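/- (Proposition 5.1) Let a_1,...,a_n with n≥2 be a semipath of an asemicyclic oriented graph D. If the edge that connects a_1 and a_2 and the edge that connects a_{n-1} and a_n are transversal, then for every i in {1,...,n-1} the edge that connects a_i and a_{i+1} is transversal. -/

import Mathlib

namespace PluralCuts

/-- The two horizontal directions: west and east. -/
inductive XDir : Type
  | W
  | E
deriving DecidableEq

/-- The two vertical directions: north and south. -/
inductive YDir : Type
  | N
  | S
deriving DecidableEq

/-- The other element of `{W, E}`. -/
def XDir.other : XDir → XDir
  | .W => .E
  | .E => .W

/-- A helper choosing between two values according to an `XDir`. -/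
def pick {α : Type*} (w e : α) : XDir → α
  | .W => w
  | .E => e

/-- A digraph on (a finite set of) natural-number vertices: a finite set of
vertices together with a finite set of edges (ordered pairs). -/
structure DG : Type where
  verts : Finset ℕ
  edges : Finset (ℕ × ℕ)

namespace DG

/-- `D` is an oriented graph: edges lie between vertices, the edge relation is
irreflexive and antisymmetric, and the vertex set is nonempty. -/
def IsOriented (D : DG) : Prop :=
  (∀ e ∈ D.edges, e.1 ∈ D.verts ∧ e.2 ∈ D.verts) ∧
  (∀ e ∈ D.edges, e.1 ≠ e.2) ∧
  (∀ a b : ℕ, (a, b) ∈ D.edges → (b, a) ∉ D.edges) ∧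
  D.verts.Nonempty

/-- A `W`-vertex: no edge ends in it. -/
def isWVert (D : DG) (a : ℕ) : Prop := a ∈ D.verts ∧ ∀ b, (b, a) ∉ D.edges

/-- An `E`-vertex: no edge begins in it. -/
def isEVert (D : DG) (a : ℕ) : Prop := a ∈ D.verts ∧ ∀ b, (a, b) ∉ D.edges

/-- An inner vertex: some edge ends in it and some edge begins in it. -/
def isInner (D : DG) (a : ℕ) : Prop :=
  a ∈ D.verts ∧ (∃ b, (b, a) ∈ D.edges) ∧ (∃ b, (a, b) ∈ D.edges)

/-- A `W`-edge: an edge beginning in a `W`-vertex. -/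
def isWEdge (D : DG) (e : ℕ × ℕ) : Prop := e ∈ D.edges ∧ D.isWVert e.1

/-- An `E`-edge: an edge ending in an `E`-vertex. -/
def isEEdge (D : DG) (e : ℕ × ℕ) : Prop := e ∈ D.edges ∧ D.isEVert e.2

/-- An `X`-edge, for `X ∈ {W, E}`. -/
def isXEdge (D : DG) : XDir → (ℕ × ℕ) → Prop
  | .W => D.isWEdge
  | .E => D.isEEdge

/-- An inner edge: it begins and ends in inner vertices. -/
def isInnerEdge (D : DG) (e : ℕ × ℕ) : Prop :=
  e ∈ D.edges ∧ D.isInner e.1 ∧ D.isInner e.2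

/-- A functional `W`-edge `(a,b)`: `(a,c) ∈ D` implies `b = c`. -/
def funcWEdge (D : DG) (e : ℕ × ℕ) : Prop :=
  D.isWEdge e ∧ ∀ c, (e.1, c) ∈ D.edges → c = e.2

/-- A functional `E`-edge `(b,a)`: `(c,a) ∈ D` implies `b = c`. -/
def funcEEdge (D : DG) (e : ℕ × ℕ) : Prop :=
  D.isEEdge e ∧ ∀ c, (c, e.2) ∈ D.edges → c = e.1

/-- `D` is `W`-`E`-functional: all its `W`-edges and `E`-edges are functional. -/
def WEFunctional (D : DG) : Prop :=
  (∀ e, D.isWEdge e → D.funcWEdge e) ∧ (∀ e, D.isEEdge e → D.funcEEdge e)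

/-- Semi-adjacency: `(a,b)` or `(b,a)` is an edge. -/
def semiAdj (D : DG) (a b : ℕ) : Prop := (a, b) ∈ D.edges ∨ (b, a) ∈ D.edges

/-- A semipath: a nonempty sequence of mutually distinct vertices in which any
two consecutive vertices are semi-adjacent. -/
def IsSemipath (D : DG) (l : List ℕ) : Prop :=
  l ≠ [] ∧ (∀ a ∈ l, a ∈ D.verts) ∧ l.Nodup ∧ l.Chain' D.semiAdj

/-- A path: a nonempty sequence of mutually distinct vertices in which
`(a_i, a_{i+1})` is an edge for consecutive vertices. -/
def IsPath (D : DG) (l : List ℕ) : Prop :=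
  l ≠ [] ∧ (∀ a ∈ l, a ∈ D.verts) ∧ l.Nodup ∧
    l.Chain' (fun a b => (a, b) ∈ D.edges)

/-- A semicycle: a sequence `a_1, ..., a_n` of vertices with `n ≥ 4`,
`a_1 = a_n`, `a_1, ..., a_{n-1}` mutually distinct, and consecutive vertices
semi-adjacent. -/
def IsSemicycle (D : DG) (l : List ℕ) : Prop :=
  4 ≤ l.length ∧ (∀ a ∈ l, a ∈ D.verts) ∧ l.head? = l.getLast? ∧
  l.dropLast.Nodup ∧ l.Chain' D.semiAdj

/-- `D` is weakly connected: every two vertices are joined by a semipath. -/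
def WeaklyConnected (D : DG) : Prop :=
  ∀ a ∈ D.verts, ∀ b ∈ D.verts,
    ∃ l, D.IsSemipath l ∧ l.head? = some a ∧ l.getLast? = some b

/-- `D` is asemicyclic: it has no semicycles. -/
def Asemicyclic (D : DG) : Prop := ∀ l, ¬ D.IsSemicycle l

/-- The cut `D_W[e_W - e_E]D_E`:
`(D_W - {e_W}) ∪ (D_E - {e_E}) ∪ {(e_W.1, e_E.2)}` on the union of the vertex
sets with `e_W.2` and `e_E.1` omitted. -/
def cut (DW DE : DG) (eW eE : ℕ × ℕ) : DG where
  verts := (DW.verts ∪ DE.verts) \ {eW.2, eE.1}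
  edges := insert (eW.1, eE.2) ((DW.edges.erase eW) ∪ (DE.edges.erase eE))

end DG

/-- The type of assignments of four distinguished edges `NW, SW, NE, SE`. -/
abbrev DistE : Type := YDir → XDir → ℕ × ℕ

/-- The type of labellings assigning to (inner) vertices four edges. -/
abbrev Lab : Type := ℕ → YDir → XDir → ℕ × ℕ

/-- `⟨D, ε⟩` is a basic K-graph: `D` is an oriented graph with a single inner
vertex `b`, all edges begin or end in `b`, every other vertex is joined to `b`
by an edge, there is at least one edge ending in `b` and one beginning in `b`,
the distinguished edges `ε Y W` end in `b` and `ε Y E` begin in `b`, and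
(XYB): if there are at least two `X`-edges then `NX ≠ SX`. -/
def IsBasicK (D : DG) (ε : DistE) : Prop :=
  D.IsOriented ∧
  ∃ b ∈ D.verts,
    (∀ e ∈ D.edges, e.1 = b ∨ e.2 = b) ∧
    (∀ v ∈ D.verts, v = b ∨ (v, b) ∈ D.edges ∨ (b, v) ∈ D.edges) ∧
    (∃ a, (a, b) ∈ D.edges) ∧ (∃ c, (b, c) ∈ D.edges) ∧
    (∀ Y : YDir, ε Y XDir.W ∈ D.edges ∧ (ε Y XDir.W).2 = b ∧
      ε Y XDir.E ∈ D.edges ∧ (ε Y XDir.E).1 = b) ∧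
    (2 ≤ (D.edges.filter (fun e => e.2 = b)).card →
      ε YDir.N XDir.W ≠ ε YDir.S XDir.W) ∧
    (2 ≤ (D.edges.filter (fun e => e.1 = b)).card →
      ε YDir.N XDir.E ≠ ε YDir.S XDir.E)

/-- `⟨D, ε⟩` is a basic Q-graph: as a basic K-graph but with no requirement
(XYB) on the distinguished edges. -/
def IsBasicQ (D : DG) (ε : DistE) : Prop :=
  D.IsOriented ∧
  ∃ b ∈ D.verts,
    (∀ e ∈ D.edges, e.1 = b ∨ e.2 = b) ∧
    (∀ v ∈ D.verts, v = b ∨ (v, b) ∈ D.edges ∨ (b, v) ∈ D.edges) ∧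
    (∃ a, (a, b) ∈ D.edges) ∧ (∃ c, (b, c) ∈ D.edges) ∧
    (∀ Y : YDir, ε Y XDir.W ∈ D.edges ∧ (ε Y XDir.W).2 = b ∧
      ε Y XDir.E ∈ D.edges ∧ (ε Y XDir.E).1 = b)

/-- Finite binary trees whose nodes carry an oriented graph, four
distinguished edges, and (at internal nodes) the two cut edges. -/
inductive CTree : Type
  | leaf (D : DG) (ε : DistE)
  | node (D : DG) (ε : DistE) (eW eE : ℕ × ℕ) (l r : CTree)

namespace CTree

/-- The graph at the root of the tree. -/
def rootGraph : CTree → DG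
  | .leaf D _ => D
  | .node D _ _ _ _ _ => D

/-- The distinguished edges at the root of the tree. -/
def dist : CTree → DistE
  | .leaf _ ε => ε
  | .node _ ε _ _ _ _ => ε

/-- The list of graphs-with-distinguished-edges at the leaves of the tree
(the basic K-graphs determining the leaves of a construction). -/
def leaves : CTree → List (DG × DistE)
  | .leaf D ε => [(D, ε)]
  | .node _ _ _ _ l r => l.leaves ++ r.leaves

end CTree

/-- The tree `G_W[e_W - e_E]G_E`, whose root graph is the cut of the root
graphs and whose distinguished edges are given by (XYD). -/
def mkNode (GW GE : CTree) (eW eE : ℕ × ℕ) : CTree :=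
  .node (DG.cut GW.rootGraph GE.rootGraph eW eE)
    (fun Y X =>
      match X with
      | .W => if eE = GE.dist Y XDir.W then GW.dist Y XDir.W else GE.dist Y XDir.W
      | .E => if eW = GW.dist Y XDir.E then GE.dist Y XDir.E else GW.dist Y XDir.E)
    eW eE GW GE

/-- The inductive notion of construction (of a global K-graph). -/
inductive IsConstruction : CTree → Prop
  | leaf (D : DG) (ε : DistE) (h : IsBasicK D ε) : IsConstruction (.leaf D ε)
  | node (D : DG) (ε : DistE) (eW eE : ℕ × ℕ) (GW GE : CTree)
      (hW : IsConstruction GW) (hE : IsConstruction GE)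
      (hdisj : Disjoint GW.rootGraph.verts GE.rootGraph.verts)
      (heW : GW.rootGraph.funcEEdge eW)
      (heE : GE.rootGraph.funcWEdge eE)
      (hD : D = DG.cut GW.rootGraph GE.rootGraph eW eE)
      (hXYC : ∀ Y : YDir, eW = GW.dist Y XDir.E ∨ eE = GE.dist Y XDir.W)
      (hεW : ∀ Y : YDir, ε Y XDir.W =
        if eE = GE.dist Y XDir.W then GW.dist Y XDir.W else GE.dist Y XDir.W)
      (hεE : ∀ Y : YDir, ε Y XDir.E =
        if eW = GW.dist Y XDir.E then GE.dist Y XDir.E else GW.dist Y XDir.E) :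
      IsConstruction (.node D ε eW eE GW GE)

/-- The inductive notion of construction of a global Q-graph: as
`IsConstruction` but with basic Q-graphs at the leaves. -/
inductive IsConstructionQ : CTree → Prop
  | leaf (D : DG) (ε : DistE) (h : IsBasicQ D ε) : IsConstructionQ (.leaf D ε)
  | node (D : DG) (ε : DistE) (eW eE : ℕ × ℕ) (GW GE : CTree)
      (hW : IsConstructionQ GW) (hE : IsConstructionQ GE)
      (hdisj : Disjoint GW.rootGraph.verts GE.rootGraph.verts)
      (heW : GW.rootGraph.funcEEdge eW)
      (heE : GE.rootGraph.funcWEdge eE)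
      (hD : D = DG.cut GW.rootGraph GE.rootGraph eW eE)
      (hXYC : ∀ Y : YDir, eW = GW.dist Y XDir.E ∨ eE = GE.dist Y XDir.W)
      (hεW : ∀ Y : YDir, ε Y XDir.W =
        if eE = GE.dist Y XDir.W then GW.dist Y XDir.W else GE.dist Y XDir.W)
      (hεE : ∀ Y : YDir, ε Y XDir.E =
        if eW = GW.dist Y XDir.E then GE.dist Y XDir.E else GW.dist Y XDir.E) :
      IsConstructionQ (.node D ε eW eE GW GE)

/-- ρ-equivalence of constructions: the least equivalence relation containing
ρ1, ρ2, ρ3 and closed under congruence with respect to cuts. -/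
inductive RhoEquiv : CTree → CTree → Prop
  | rho1 (P Q R : CTree) (eW eE fW fE : ℕ × ℕ)
      (hP : IsConstruction P) (hQ : IsConstruction Q) (hR : IsConstruction R)
      (heW : P.rootGraph.isEEdge eW) (hfW : Q.rootGraph.isEEdge fW)
      (heE : Q.rootGraph.isWEdge eE) (hfE : R.rootGraph.isWEdge fE)
      (h1 : IsConstruction (mkNode (mkNode P Q eW eE) R fW fE))
      (h2 : IsConstruction (mkNode P (mkNode Q R fW fE) eW eE)) :
      RhoEquiv (mkNode (mkNode P Q eW eE) R fW fE)
               (mkNode P (mkNode Q R fW fE) eW eE)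
  | rho2 (P Q R : CTree) (eW eE fW fE : ℕ × ℕ)
      (hP : IsConstruction P) (hQ : IsConstruction Q) (hR : IsConstruction R)
      (heW : P.rootGraph.isEEdge eW) (hfW : P.rootGraph.isEEdge fW)
      (hne : eW ≠ fW)
      (heE : Q.rootGraph.isWEdge eE) (hfE : R.rootGraph.isWEdge fE)
      (h1 : IsConstruction (mkNode (mkNode P Q eW eE) R fW fE))
      (h2 : IsConstruction (mkNode (mkNode P R fW fE) Q eW eE)) :
      RhoEquiv (mkNode (mkNode P Q eW eE) R fW fE)
               (mkNode (mkNode P R fW fE) Q eW eE)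
  | rho3 (P Q R : CTree) (eW eE fW fE : ℕ × ℕ)
      (hP : IsConstruction P) (hQ : IsConstruction Q) (hR : IsConstruction R)
      (heE : P.rootGraph.isWEdge eE) (hfE : P.rootGraph.isWEdge fE)
      (hne : eE ≠ fE)
      (heW : Q.rootGraph.isEEdge eW) (hfW : R.rootGraph.isEEdge fW)
      (h1 : IsConstruction (mkNode R (mkNode Q P eW eE) fW fE))
      (h2 : IsConstruction (mkNode Q (mkNode R P fW fE) eW eE)) :
      RhoEquiv (mkNode R (mkNode Q P eW eE) fW fE)
               (mkNode Q (mkNode R P fW fE) eW eE)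
  | congr (G1 G2 H1 H2 : CTree) (eW eE : ℕ × ℕ)
      (h12 : RhoEquiv G1 G2) (h34 : RhoEquiv H1 H2)
      (hc1 : IsConstruction (mkNode G1 H1 eW eE))
      (hc2 : IsConstruction (mkNode G2 H2 eW eE)) :
      RhoEquiv (mkNode G1 H1 eW eE) (mkNode G2 H2 eW eE)
  | refl (G : CTree) (h : IsConstruction G) : RhoEquiv G G
  | symm {G H : CTree} (h : RhoEquiv G H) : RhoEquiv H G
  | trans {G H K : CTree} (h1 : RhoEquiv G H) (h2 : RhoEquiv H K) :
      RhoEquiv G K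

/-- The class `[G]`: all constructions with the same root graph as `G` whose
leaves are determined by the same basic K-graphs as those of `G`. -/
def classOf (G : CTree) : Set CTree :=
  {H | IsConstruction H ∧ H.rootGraph = G.rootGraph ∧
    ∀ p : DG × DistE, p ∈ H.leaves ↔ p ∈ G.leaves}

/-- Renaming the vertices of a digraph along a function. -/
def DG.rename (f : ℕ → ℕ) (D : DG) : DG where
  verts := D.verts.image f
  edges := D.edges.image (fun e => (f e.1, f e.2))

/-- Renaming the vertices throughout a tree. -/
def CTree.rename (f : ℕ → ℕ) : CTree → CTree
  | .leaf D ε => .leaf (DG.rename f D) (fun Y X => (f (ε Y X).1, f (ε Y X).2))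
  | .node D ε eW eE l r =>
      .node (DG.rename f D) (fun Y X => (f (ε Y X).1, f (ε Y X).2))
        (f eW.1, f eW.2) (f eE.1, f eE.2) (l.rename f) (r.rename f)

/-- σ-equivalence: `H` is obtained from `G` by a bijective renaming of
vertices that fixes the root vertices (so only secondary vertices may be
renamed). -/
def SigmaEquiv (G H : CTree) : Prop :=
  ∃ f : ℕ ≃ ℕ, (∀ v ∈ G.rootGraph.verts, f v = v) ∧ H = G.rename f

/-- The global compass graph `‖G‖`: all constructions σ-equivalent to a
construction in `[G]`. -/
def normClass (G : CTree) : Set CTree :=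
  {H | ∃ K ∈ classOf G, SigmaEquiv K H}

/-- The labelling `L` of `λ(G) = ⟨D, L⟩`, defined by induction on `G`: at a
leaf given by a basic K-graph with inner vertex `b`, `YX(b) = YX(B)`; at a
node, the value is inherited from the appropriate subtree unless it is one of
the two cut edges, in which case it is the new edge introduced by the cut. -/
def lamG : CTree → Lab
  | .leaf _ ε => fun _ => ε
  | .node _ _ eW eE l r => fun a Y X =>
      let v := if a ∈ l.rootGraph.verts then lamG l a Y X else lamG r a Y X
      if v = eW ∨ v = eE then (eW.1, eE.2) else v

/-- `L` assigns to every inner vertex `a` edges `L a Y W` ending in `a` and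
edges `L a Y E` beginning in `a`. -/
def ProperLab (D : DG) (L : Lab) : Prop :=
  ∀ a, D.isInner a → ∀ Y : YDir,
    L a Y XDir.W ∈ D.edges ∧ (L a Y XDir.W).2 = a ∧
    L a Y XDir.E ∈ D.edges ∧ (L a Y XDir.E).1 = a

/-- `⟨D, L⟩` separates `N` from `S`. -/
def SeparatesNS (D : DG) (L : Lab) : Prop :=
  ∀ a, D.isInner a →
    (2 ≤ (D.edges.filter (fun e => e.2 = a)).card →
      L a YDir.N XDir.W ≠ L a YDir.S XDir.W) ∧
    (2 ≤ (D.edges.filter (fun e => e.1 = a)).card →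
      L a YDir.N XDir.E ≠ L a YDir.S XDir.E)

/-- A list `a_1, ..., a_n` is `Y`-decent in `⟨D, L⟩`: `n = 1`, or
`YE(a_1) = (a_1, a_2)`, or `YW(a_n) = (a_{n-1}, a_n)`. -/
def Ydecent (L : Lab) (Y : YDir) (l : List ℕ) : Prop :=
  ∀ a b t, l = a :: b :: t →
    (L a Y XDir.E = (a, b) ∨
      ∃ c d t', l.reverse = d :: c :: t' ∧ L d Y XDir.W = (c, d))

/-- `⟨D, L⟩` is a local compass graph. -/
def IsLocalCompass (D : DG) (L : Lab) : Prop :=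
  D.IsOriented ∧ ProperLab D L ∧
  D.WeaklyConnected ∧ D.Asemicyclic ∧ D.WEFunctional ∧ (∃ a, D.isInner a) ∧
  SeparatesNS D L ∧
  (∀ l, D.IsPath l → Ydecent L YDir.N l ∧ Ydecent L YDir.S l)

/-- A path (list) covers an edge `g` when `g` is a pair of consecutive
vertices of the list. -/
def covers (l : List ℕ) (g : ℕ × ℕ) : Prop := g ∈ l.zip l.tail

/-- A `YX`-edge in `⟨D, L⟩`. -/
def YXedge (D : DG) (L : Lab) (Y : YDir) : XDir → (ℕ × ℕ) → Prop
  | .W, g => g ∈ D.edges ∧ (L g.2 Y XDir.W = g ∨ D.isEEdge g)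
  | .E, g => g ∈ D.edges ∧ (L g.1 Y XDir.E = g ∨ D.isWEdge g)

/-- A proper semipath: a semipath such that neither it nor its reverse is a
path. -/
def ProperSemipath (D : DG) (l : List ℕ) : Prop :=
  D.IsSemipath l ∧ ¬ D.IsPath l ∧ ¬ D.IsPath l.reverse

/-- A transversal edge `(a,b)`: there is a proper semipath beginning with
`a, b` and a proper semipath beginning with `b, a`. -/
def Transversal (D : DG) (e : ℕ × ℕ) : Prop :=
  e ∈ D.edges ∧
  (∃ t, ProperSemipath D (e.1 :: e.2 :: t)) ∧
  (∃ t, ProperSemipath D (e.2 :: e.1 :: t))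

/-- The edge of `D` that connects two semi-adjacent vertices `a` and `b`. -/
def connEdge (D : DG) (a b : ℕ) : ℕ × ℕ :=
  if (a, b) ∈ D.edges then (a, b) else (b, a)

/-- The connecting edges of a list: the edges connecting its consecutive
vertices. -/
def connEdges (D : DG) (l : List ℕ) (e : ℕ × ℕ) : Prop :=
  ∃ p ∈ l.zip l.tail, e = connEdge D p.1 p.2

/-- A bifurcation: three distinct edges with a common vertex. -/
def Bifurcation (D : DG) (e1 e2 e3 : ℕ × ℕ) : Prop :=
  e1 ∈ D.edges ∧ e2 ∈ D.edges ∧ e3 ∈ D.edges ∧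
  e1 ≠ e2 ∧ e1 ≠ e3 ∧ e2 ≠ e3 ∧
  ∃ v, (v = e1.1 ∨ v = e1.2) ∧ (v = e2.1 ∨ v = e2.2) ∧ (v = e3.1 ∨ v = e3.2)

/-- A K-graph: a weakly connected, asemicyclic, `W`-`E`-functional oriented
graph with an inner vertex in which no bifurcation is transversal. -/
def IsKGraph (D : DG) : Prop :=
  D.IsOriented ∧ D.WeaklyConnected ∧ D.Asemicyclic ∧ D.WEFunctional ∧
  (∃ a, D.isInner a) ∧
  ∀ e1 e2 e3, Bifurcation D e1 e2 e3 →
    ¬ (Transversal D e1 ∧ Transversal D e2 ∧ Transversal D e3)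

/-- A Q-graph: a weakly connected, asemicyclic, `W`-`E`-functional oriented
graph with an inner vertex. -/
def IsQGraph (D : DG) : Prop :=
  D.IsOriented ∧ D.WeaklyConnected ∧ D.Asemicyclic ∧ D.WEFunctional ∧
  ∃ a, D.isInner a


/-!
Let `x, y` be consecutive vertices of the semipath and `c, d` its last two. Gluing the segment
`x, y, …, c` to a proper semipath `c, d, …`, which exists because the last edge is transversal,
gives a proper semipath starting with `x, y`: it is a semipath because a repeated vertex would
close a semicycle, and it is proper because it contains the proper semipath `c, d, …` as a
segment. The same argument on the reversed semipath, using the first edge, gives a proper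
semipath starting with `y, x`.
-/

theorem _root_.List.exists_eq_append_cons_cons_of_mem_zip_tail {α : Type*} :
    ∀ {l : List α} {x y : α}, (x, y) ∈ l.zip l.tail → ∃ l₁ l₂, l = l₁ ++ x :: y :: l₂
  | [], _, _, h | [_], _, _, h => by simp at h
  | a :: b :: t, x, y, h => by
    rcases List.mem_cons.mp h with h | h
    · obtain ⟨rfl, rfl⟩ := Prod.mk.inj h
      exact ⟨[], t, rfl⟩
    · obtain ⟨l₁, l₂, hl⟩ := List.exists_eq_append_cons_cons_of_mem_zip_tail h
      exact ⟨a :: l₁, l₂, by rw [hl]; rfl⟩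

namespace DG

variable {D : DG}

theorem IsSemipath.reverse {l : List ℕ} (h : D.IsSemipath l) : D.IsSemipath l.reverse :=
  ⟨by simpa using h.1, by simpa using h.2.1, by simpa using h.2.2.1,
    List.isChain_reverse.mpr (h.2.2.2.imp fun _ _ hab => hab.symm)⟩

theorem IsSemipath.infix {l u : List ℕ} (h : D.IsSemipath l) (hu : u <:+: l) (hne : u ≠ []) :
    D.IsSemipath u :=
  ⟨hne, fun a ha => h.2.1 a (hu.subset ha), h.2.2.1.sublist hu.sublist, h.2.2.2.infix hu⟩

theorem IsPath.infix {l u : List ℕ} (h : D.IsPath l) (hu : u <:+: l) (hne : u ≠ []) :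
    D.IsPath u :=
  ⟨hne, fun a ha => h.2.1 a (hu.subset ha), h.2.2.1.sublist hu.sublist, h.2.2.2.infix hu⟩

theorem IsSemipath.semiAdj {l₁ l₂ : List ℕ} {x y : ℕ} (h : D.IsSemipath (l₁ ++ x :: y :: l₂)) :
    D.semiAdj x y :=
  List.isChain_pair.mp (h.2.2.2.infix ⟨l₁, l₂, by simp⟩)

theorem isSemicycle_of_isChain {w : ℕ} {p : List ℕ} (hnd : (w :: p).Nodup) (hlen : 2 ≤ p.length)
    (hv : ∀ v ∈ w :: p, v ∈ D.verts) (hc : (w :: p ++ [w]).IsChain D.semiAdj) :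
    D.IsSemicycle (w :: p ++ [w]) :=
  ⟨by simp; omega, fun v hv' =>
    (List.mem_append.mp hv').elim (hv v) fun h => List.mem_singleton.mp h ▸ hv w List.mem_cons_self,
    by rw [List.getLast?_concat]; rfl, by rwa [List.dropLast_concat], hc⟩

theorem Asemicyclic.disjoint_of_isSemipath (hac : D.Asemicyclic) {l s : List ℕ} {c d : ℕ}
    (hp : D.IsSemipath (l ++ [c, d])) (hq : D.IsSemipath (c :: d :: s)) : ∀ v ∈ l, v ∉ s := by
  intro v hvl hvs
  -- the first vertex `w` of `s` on `l` closes the semicycle `w, …, c, d, …, w`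
  obtain ⟨w, hw⟩ : ∃ w, s.find? (· ∈ l) = some w :=
    Option.isSome_iff_exists.mp (List.find?_isSome.mpr ⟨v, hvs, by simpa using hvl⟩)
  obtain ⟨hwl, u₁, u₂, rfl, hu₁⟩ := List.find?_eq_some_iff_append.mp hw
  simp only [decide_eq_true_eq, Bool.not_eq_eq_eq_not, Bool.not_true, decide_eq_false_iff_not]
    at hwl hu₁
  obtain ⟨l₁, l₂, rfl⟩ := List.append_of_mem hwl
  apply hac (w :: (l₂ ++ [c, d] ++ u₁) ++ [w])
  refine isSemicycle_of_isChain ?_ (by simp; omega) ?_ ?_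
  · have hcdu : (c :: d :: u₁).Nodup := hq.2.2.1.sublist (by simp)
    rw [← List.cons_append, List.nodup_append]
    refine ⟨hp.2.2.1.sublist (by simp), hcdu.of_cons.of_cons, ?_⟩
    rintro a ha b hb rfl
    simp only [List.mem_cons, List.mem_append, List.not_mem_nil, or_false] at ha
    rcases ha with rfl | ha | rfl | rfl
    · exact hu₁ a hb (by simp)
    · exact hu₁ a hb (by simp [ha])
    · exact (List.nodup_cons.mp hcdu).1 (by simp [hb])
    · exact (List.nodup_cons.mp hcdu.of_cons).1 hb
  · intro z hz
    have hcover : z ∈ l₁ ++ w :: l₂ ++ [c, d] ∨ z ∈ c :: d :: (u₁ ++ w :: u₂) := by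
      simp only [List.mem_cons, List.mem_append, List.not_mem_nil, or_false] at hz ⊢
      tauto
    exact hcover.elim (hp.2.1 z) (hq.2.1 z)
  · have h₁ : (w :: l₂ ++ [c, d]).IsChain D.semiAdj := hp.2.2.2.infix ⟨l₁, [], by simp⟩
    have h₂ : ([c, d] ++ (u₁ ++ [w])).IsChain D.semiAdj := hq.2.2.2.infix ⟨[], u₂, by simp⟩
    simpa using h₁.append_overlap h₂ (by simp)

end DG

section

variable {D : DG}

theorem ProperSemipath.of_infix {l L : List ℕ} (hl : ProperSemipath D l) (hL : D.IsSemipath L)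
    (hlL : l <:+: L) : ProperSemipath D L :=
  ⟨hL, fun hp => hl.2.1 (hp.infix hlL hl.1.1),
    fun hp => hl.2.2 (hp.infix (List.reverse_infix.mpr hlL) (by simpa using hl.1.1))⟩

theorem Transversal.exists_properSemipath_of_connEdge {u v : ℕ}
    (h : Transversal D (connEdge D u v)) :
    (∃ s, ProperSemipath D (u :: v :: s)) ∧ ∃ s, ProperSemipath D (v :: u :: s) := by
  unfold connEdge at h
  split at h
  · exact h.2
  · exact h.2.symm

theorem transversal_connEdge {u v : ℕ} (huv : D.semiAdj u v)
    (h₁ : ∃ s, ProperSemipath D (u :: v :: s)) (h₂ : ∃ s, ProperSemipath D (v :: u :: s)) :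
    Transversal D (connEdge D u v) := by
  unfold connEdge
  split
  · exact ⟨‹_›, h₁, h₂⟩
  · exact ⟨huv.resolve_left ‹_›, h₂, h₁⟩

theorem DG.Asemicyclic.properSemipath_append (hac : D.Asemicyclic) {l s : List ℕ} {c d : ℕ}
    (hp : D.IsSemipath (l ++ [c, d])) (hq : ProperSemipath D (c :: d :: s)) :
    ProperSemipath D (l ++ c :: d :: s) := by
  have hls := hac.disjoint_of_isSemipath hp hq.1
  have hcds := hq.1.2.2.1
  rw [show l ++ c :: d :: s = l ++ [c, d] ++ s by simp]
  refine hq.of_infix ⟨by simp, ?_, ?_, hp.2.2.2.append_overlap hq.1.2.2.2 (by simp)⟩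
    ⟨l, [], by simp⟩
  · intro z hz
    rcases List.mem_append.mp hz with hz | hz
    · exact hp.2.1 z hz
    · exact hq.1.2.1 z (by simp [hz])
  · refine List.nodup_append.mpr ⟨hp.2.2.1, hcds.of_cons.of_cons, ?_⟩
    rintro a ha b hb rfl
    simp only [List.mem_append, List.mem_cons, List.not_mem_nil, or_false] at ha
    rcases ha with ha | rfl | rfl
    · exact hls a ha hb
    · exact (List.nodup_cons.mp hcds).1 (by simp [hb])
    · exact (List.nodup_cons.mp hcds.of_cons).1 hb

theorem DG.Asemicyclic.exists_properSemipath_of_last (hac : D.Asemicyclic) {l₁ l₂ : List ℕ}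
    {x y : ℕ} (hL : D.IsSemipath (l₁ ++ x :: y :: l₂))
    (hlast : ∀ c d r, (l₁ ++ x :: y :: l₂).reverse = d :: c :: r →
      ∃ s, ProperSemipath D (c :: d :: s)) :
    ∃ u, ProperSemipath D (x :: y :: u) := by
  obtain ⟨d, c, r, hr⟩ : ∃ d c r, (x :: y :: l₂).reverse = d :: c :: r := by
    rcases h : (x :: y :: l₂).reverse with _ | ⟨d, _ | ⟨c, r⟩⟩
    all_goals first | exact ⟨d, c, r, rfl⟩ | simpa using congrArg List.length h
  have hxy : x :: y :: l₂ = r.reverse ++ [c, d] := by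
    rw [← List.reverse_reverse (x :: y :: l₂), hr]
    simp
  obtain ⟨s, hs⟩ := hlast c d (r ++ l₁.reverse)
    (by rw [List.reverse_append, hr]; rfl)
  refine ⟨l₂ ++ s, ?_⟩
  have hsuffix : D.IsSemipath (r.reverse ++ [c, d]) :=
    hxy ▸ hL.infix ⟨l₁, [], by simp⟩ (by simp)
  rw [show x :: y :: (l₂ ++ s) = r.reverse ++ c :: d :: s by
    rw [← List.cons_append, ← List.cons_append, hxy]; simp]
  exact hac.properSemipath_append hsuffix hs

end

theorem prop_5_1_general (D : DG) (hac : D.Asemicyclic)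
    (a b : ℕ) (t : List ℕ) (hl : D.IsSemipath (a :: b :: t))
    (hfirst : Transversal D (connEdge D a b))
    (hlast : ∀ c d t', (a :: b :: t).reverse = d :: c :: t' →
      Transversal D (connEdge D c d)) :
    ∀ p ∈ (a :: b :: t).zip (b :: t), Transversal D (connEdge D p.1 p.2) := by
  rintro ⟨x, y⟩ hxy
  obtain ⟨l₁, l₂, hL⟩ := List.exists_eq_append_cons_cons_of_mem_zip_tail hxy
  rw [hL] at hl hlast
  refine transversal_connEdge hl.semiAdj ?_ ?_
  · exact hac.exists_properSemipath_of_last hl fun c d r hr =>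
      (hlast c d r hr).exists_properSemipath_of_connEdge.1
  · refine hac.exists_properSemipath_of_last (l₁ := l₂.reverse) (l₂ := l₁.reverse)
      (by simpa using hl.reverse) fun c d r hr => ?_
    obtain ⟨rfl, rfl, -⟩ : a = d ∧ b = c ∧ t = r := by simpa [← hL] using hr
    exact hfirst.exists_properSemipath_of_connEdge.2

/-- Proposition 5.1: in a semipath of an asemicyclic oriented graph, if the
first and the last connecting edges are transversal, then all connecting
edges are transversal. -/
theorem prop_5_1 (D : DG) (hD : D.IsOriented) (hac : D.Asemicyclic)
    (a b : ℕ) (t : List ℕ) (hl : D.IsSemipath (a :: b :: t))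
    (hfirst : Transversal D (connEdge D a b))
    (hlast : ∀ c d t', (a :: b :: t).reverse = d :: c :: t' →
      Transversal D (connEdge D c d)) :
    ∀ p ∈ (a :: b :: t).zip (b :: t), Transversal D (connEdge D p.1 p.2) :=
  prop_5_1_general D hac a b t hl hfirst hlast
end PluralCuts
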